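/- arXiv:1805.01789 — 2 statements merged into one kernel-verified Lean document; each statement's English description precedes it below -/
import Mathlib

section
/- Let n ∈ ℕ, α ∈ (n, n+1], and let f : ℤ → ℝ vanish on all nonpositive integers. Then for every integer k ≥ 1, the conformable fractional difference of order α of the conformable fractional accumulation of order α of f at k recovers f(k); that is, k^{⌈α⌉−α}·(Δ^{n+1}(S^{n+1} g))(k) = f(k), where g(j) = f(j)·j^{α−⌈α⌉} for j ≥ 1 and g = 0 on nonpositive integers. -/
/-- The cumulative-sum operator: `(S h)(k) = ∑_{j=1}^{k} h j` for `k ≥ 1` and `0` for `k ≤ 0`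
(the sum over `Finset.Icc 1 k` is empty when `k ≤ 0`). -/
noncomputable def cumSum (h : ℤ → ℝ) : ℤ → ℝ := fun k => ∑ j ∈ Finset.Icc (1 : ℤ) k, h j

/-- The backward difference operator `(Δ h)(k) = h k - h (k-1)`. -/
def backDiff (h : ℤ → ℝ) : ℤ → ℝ := fun k => h k - h (k - 1)

/-! `Δ` undoes `S` on sequences vanishing on the nonpositive integers, and `S` produces such
sequences, so `Δ^{n+1} S^{n+1} g = g`; the factor `k^{⌈α⌉-α}` then cancels the weight
`k^{α-⌈α⌉}` in `g k`. -/

lemma cumSum_of_nonpos (h : ℤ → ℝ) (k : ℤ) (hk : k ≤ 0) : cumSum h k = 0 :=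
  Finset.sum_eq_zero fun j hj => by grind

lemma backDiff_cumSum_of_pos (h : ℤ → ℝ) {k : ℤ} (hk : 1 ≤ k) : backDiff (cumSum h) k = h k := by
  simp only [backDiff, cumSum, ← Finset.insert_Icc_sub_one_right_eq_Icc hk]
  rw [Finset.sum_insert (by simp), add_sub_cancel_right]

lemma backDiff_cumSum {h : ℤ → ℝ} (hh : ∀ k : ℤ, k ≤ 0 → h k = 0) : backDiff (cumSum h) = h := by
  funext k
  rcases le_or_gt k 0 with hk | hk
  · simp [backDiff, cumSum_of_nonpos h k hk, cumSum_of_nonpos h (k - 1) (by omega), hh k hk]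
  · exact backDiff_cumSum_of_pos h hk

lemma iterate_backDiff_iterate_cumSum (m : ℕ) {h : ℤ → ℝ} (hh : ∀ k : ℤ, k ≤ 0 → h k = 0) :
    backDiff^[m] (cumSum^[m] h) = h := by
  induction m generalizing h with
  | zero => rfl
  | succ m ih =>
    rw [Function.iterate_succ_apply cumSum, Function.iterate_succ_apply' backDiff,
      ih (cumSum_of_nonpos h), backDiff_cumSum hh]

theorem higher_cfd_cfa_inverse_general
    (n : ℕ) (α : ℝ)
    (f : ℤ → ℝ)
    (g : ℤ → ℝ)
    (hg : ∀ j : ℤ, 1 ≤ j → g j = f j * (j : ℝ) ^ (α - (n + 1 : ℝ)))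
    (hg0 : ∀ j : ℤ, j ≤ 0 → g j = 0)
    (k : ℤ) (hk : 1 ≤ k) :
    (k : ℝ) ^ ((n + 1 : ℝ) - α) * backDiff^[n + 1] (cumSum^[n + 1] g) k = f k := by
  have hk_pos : (0 : ℝ) < k := by exact_mod_cast hk
  rw [iterate_backDiff_iterate_cumSum (n + 1) hg0, hg k hk, mul_left_comm,
    ← Real.rpow_add hk_pos]
  simp

/-- The conformable fractional difference of order `α ∈ (n, n+1]` inverts the conformable
fractional accumulation of the same order: for `f : ℤ → ℝ` vanishing on nonpositive integers and
`g j = f j * j^(α - ⌈α⌉)` for `j ≥ 1` (with `g = 0` on nonpositive integers and `⌈α⌉ = n+1`),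
one has `k^(⌈α⌉-α) * (Δ^(n+1) (S^(n+1) g))(k) = f k` for every `k ≥ 1`. -/
theorem higher_cfd_cfa_inverse
    (n : ℕ) (α : ℝ) (hα : α ∈ Set.Ioc (n : ℝ) (n + 1))
    (f : ℤ → ℝ) (hf : ∀ k : ℤ, k ≤ 0 → f k = 0)
    (g : ℤ → ℝ)
    (hg : ∀ j : ℤ, 1 ≤ j → g j = f j * (j : ℝ) ^ (α - (n + 1 : ℝ)))
    (hg0 : ∀ j : ℤ, j ≤ 0 → g j = 0)
    (k : ℤ) (hk : 1 ≤ k) :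
    (k : ℝ) ^ ((n + 1 : ℝ) - α) * backDiff^[n + 1] (cumSum^[n + 1] g) k = f k :=
  higher_cfd_cfa_inverse_general n α f g hg hg0 k hk
end

section
/- Let α ∈ ℝ and f : ℕ → ℝ. Then for every integer k ≥ 1, the fractional order difference of order α of the fractional order accumulation of order α of f recovers f(k); that is, ∑_{j=1}^{k} w₋(α, k−j)·(∑_{i=1}^{j} w₊(α, j−i)·f(i)) = f(k), where w₊(α, r) = (∏_{i=0}^{r−1}(α + i))/r! and w₋(α, r) = (∏_{i=0}^{r−1}(i − α))/r!. -/
/-!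
`w₊(α, r)` is the multiset coefficient `multichoose α r`, the `r`-th coefficient of `(1 - x)^(-α)`,
and `w₋(α, r) = w₊(-α, r)`. Composing the two lower-triangular Toeplitz operators convolves their
weights, and the Chu–Vandermonde identity for multiset coefficients turns that convolution into
`multichoose 0 · = δ₀`.
-/

/-- The generalized binomial weight `w₊(α, r) = (∏_{i=0}^{r-1} (α + i)) / r!` of the fractional
order accumulation. -/
noncomputable def wPlus (α : ℝ) (r : ℕ) : ℝ :=
  (∏ i ∈ Finset.range r, (α + i)) / (Nat.factorial r)

/-- The generalized binomial weight `w₋(α, r) = (∏_{i=0}^{r-1} (i - α)) / r!` of the fractional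
order difference. -/
noncomputable def wMinus (α : ℝ) (r : ℕ) : ℝ :=
  (∏ i ∈ Finset.range r, ((i : ℝ) - α)) / (Nat.factorial r)

open Finset

theorem Ring.multichoose_eq_negOnePow_smul_choose_neg {R : Type*} [Ring R] [BinomialRing R]
    (r : R) (n : ℕ) : multichoose r n = Int.negOnePow n • choose (-r) n := by
  rw [choose_neg', smul_smul, ← Int.negOnePow_add, Int.negOnePow_even _ (Even.add_self _), one_smul]

theorem Ring.add_multichoose_eq {R : Type*} [Ring R] [BinomialRing R] {r s : R} (n : ℕ)
    (h : Commute r s) :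
    multichoose (r + s) n = ∑ ij ∈ antidiagonal n, multichoose r ij.1 * multichoose s ij.2 := by
  have hneg : Commute (-r) (-s) := h.neg_left.neg_right
  rw [multichoose_eq_negOnePow_smul_choose_neg, neg_add, add_choose_eq n hneg, smul_sum]
  refine sum_congr rfl fun ij hij => ?_
  rw [multichoose_eq_negOnePow_smul_choose_neg r, multichoose_eq_negOnePow_smul_choose_neg s,
    smul_mul_smul_comm, ← Int.negOnePow_add, ← Nat.cast_add, mem_antidiagonal.mp hij]

theorem ascPochhammer_eval_eq_prod_range {S : Type*} [CommSemiring S] (x : S) (n : ℕ) :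
    (ascPochhammer S n).eval x = ∏ i ∈ range n, (x + i) := by
  induction n with
  | zero => simp
  | succ n ih => rw [ascPochhammer_succ_eval, ih, prod_range_succ]

theorem wPlus_eq_multichoose (α : ℝ) (r : ℕ) : wPlus α r = Ring.multichoose α r := by
  have hr : (r.factorial : ℝ) ≠ 0 := Nat.cast_ne_zero.mpr r.factorial_ne_zero
  rw [← mul_right_inj' hr, ← nsmul_eq_mul _ (Ring.multichoose α r),
    Ring.factorial_nsmul_multichoose_eq_ascPochhammer, Polynomial.ascPochhammer_smeval_eq_eval,
    ascPochhammer_eval_eq_prod_range, wPlus, mul_div_cancel₀ _ hr]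

theorem wMinus_eq_wPlus_neg (α : ℝ) (r : ℕ) : wMinus α r = wPlus (-α) r := by
  simp only [wMinus, wPlus, sub_eq_neg_add]

theorem sum_antidiagonal_wMinus_mul_wPlus (α : ℝ) (n : ℕ) :
    ∑ ij ∈ antidiagonal n, wMinus α ij.1 * wPlus α ij.2 = if n = 0 then 1 else 0 := by
  simp only [wMinus_eq_wPlus_neg, wPlus_eq_multichoose]
  rw [← Ring.add_multichoose_eq n (Commute.all _ _), neg_add_cancel]
  cases n with
  | zero => simp
  | succ n => simp [Ring.multichoose_zero_succ]

theorem sum_Icc_sub_mul_sum_Icc_sub {R : Type*} [CommSemiring R] (a b f : ℕ → R) (k : ℕ) :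
    ∑ j ∈ Icc 1 k, a (k - j) * ∑ i ∈ Icc 1 j, b (j - i) * f i
      = ∑ i ∈ Icc 1 k, (∑ ij ∈ antidiagonal (k - i), a ij.1 * b ij.2) * f i := by
  simp_rw [mul_sum, sum_mul]
  rw [sum_comm' (t' := Icc 1 k) (s' := fun i => Icc i k)
    (fun j i => by simp only [mem_Icc]; omega)]
  refine sum_congr rfl fun i hi => ?_
  have hik : i ≤ k := (mem_Icc.mp hi).2
  rw [Nat.sum_antidiagonal_eq_sum_range_succ_mk, ← Ico_add_one_right_eq_Icc,
    sum_Ico_eq_sum_range, ← sum_range_reflect, Nat.sub_add_comm hik]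
  refine sum_congr rfl fun r hr => ?_
  have hr : r < k - i + 1 := mem_range.mp hr
  rw [← mul_assoc, show k - (i + (k - i + 1 - 1 - r)) = r by omega,
    show i + (k - i + 1 - 1 - r) - i = k - i - r by omega]

/-- Wu's fractional order difference of order `α` inverts Wu's fractional order accumulation of
order `α`: for every `k ≥ 1`,
`∑_{j=1}^{k} w₋(α, k-j) * (∑_{i=1}^{j} w₊(α, j-i) * f i) = f k`. -/
theorem fod_foa_inverse (α : ℝ) (f : ℕ → ℝ) (k : ℕ) (hk : 1 ≤ k) :
    ∑ j ∈ Finset.Icc 1 k, wMinus α (k - j) * (∑ i ∈ Finset.Icc 1 j, wPlus α (j - i) * f i)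
      = f k := by
  simp_rw [sum_Icc_sub_mul_sum_Icc_sub, sum_antidiagonal_wMinus_mul_wPlus, ite_mul, one_mul,
    zero_mul]
  have hdiag : {i ∈ Icc 1 k | k - i = 0} = {k} := by
    ext i
    simp only [mem_filter, mem_Icc, mem_singleton]
    omega
  rw [sum_ite, sum_const_zero, add_zero, hdiag, sum_singleton]
end
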